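/- If X ⊆ S^{n−1} is a spherical 2e-design (e a positive integer, n ≥ 2), then |X| ≥ C(n−1+e, n−1) + C(n−2+e, n−1). -/

import Mathlib

open MeasureTheory Metric Finset
open scoped Classical RealInnerProductSpace

noncomputable section

/-- Euclidean `n`-space `ℝⁿ`. -/
abbrev Euc (n : ℕ) := EuclideanSpace ℝ (Fin n)

/-- Evaluation of a multivariate polynomial at a point of `ℝⁿ`. -/
def evalPt {n : ℕ} (x : Euc n) (p : MvPolynomial (Fin n) ℝ) : ℝ :=
  MvPolynomial.eval (fun i => x i) p

/-- The normalized average (with respect to the `O(n)`-invariant surface measure,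
i.e. the `(n-1)`-dimensional Hausdorff measure) of `f` over the sphere of radius `r`
centered at the origin; for `r = 0` it is `f 0`. -/
def sphAvg (n : ℕ) (r : ℝ) (f : Euc n → ℝ) : ℝ :=
  if r = 0 then f 0
  else ⨍ y in Metric.sphere (0 : Euc n) r, f y ∂(μH[(n : ℝ) - 1])

/-- `(X, w)` is a Euclidean `t`-design in `ℝⁿ`:
`∑ᵢ (w(Xᵢ)/|Sᵢ|) ∫_{Sᵢ} f dσᵢ = ∑_{x ∈ X} w(x) f(x)` for all polynomials `f` of
degree at most `t`, where the `Sᵢ` are the concentric spheres supporting `X`. -/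
def IsEuclideanDesign (n t : ℕ) (X : Finset (Euc n)) (w : Euc n → ℝ) : Prop :=
  ∀ p : MvPolynomial (Fin n) ℝ, p.totalDegree ≤ t →
    ∑ r ∈ X.image (fun x => ‖x‖),
        (∑ x ∈ X.filter (fun x => ‖x‖ = r), w x) * sphAvg n r (fun y => evalPt y p)
      = ∑ x ∈ X, w x * evalPt x p

/-- Restriction of polynomials to a subset `S ⊆ ℝⁿ`, as a linear map. -/
def polyRestrict (n : ℕ) (S : Set (Euc n)) :
    MvPolynomial (Fin n) ℝ →ₗ[ℝ] (S → ℝ) where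
  toFun p := fun x => evalPt (x : Euc n) p
  map_add' p q := by funext x; simp [evalPt]
  map_smul' c p := by funext x; simp [evalPt, MvPolynomial.smul_eval]

/-- `Pol_e(S)`: the space of restrictions to `S` of polynomials of total degree at most `e`. -/
def PolOn (n e : ℕ) (S : Set (Euc n)) : Submodule ℝ (S → ℝ) :=
  (MvPolynomial.restrictTotalDegree (Fin n) ℝ e).map (polyRestrict n S)

/-- `dim Pol_e(S)`. -/
def dimPolOn (n e : ℕ) (S : Set (Euc n)) : ℕ := Module.finrank ℝ (PolOn n e S)

/-- The union of the concentric spheres (centered at the origin) supporting `X`. -/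
def suppSpheres (n : ℕ) (X : Finset (Euc n)) : Set (Euc n) :=
  ⋃ r ∈ X.image (fun x => ‖x‖), Metric.sphere (0 : Euc n) r

/-- `(X, w)` is a tight Euclidean `2e`-design on `S` (the union of the concentric
spheres supporting `X`): it is a Euclidean `2e`-design with `|X| = dim Pol_e(S)`. -/
def IsTightOnS (n e : ℕ) (X : Finset (Euc n)) (w : Euc n → ℝ) : Prop :=
  IsEuclideanDesign n (2 * e) X w ∧ X.card = dimPolOn n e (suppSpheres n X)

/-- `(X, w)` is a tight Euclidean `2e`-design: tight on `S` and moreover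
`dim Pol_e(S) = dim Pol_e(ℝⁿ) = C(n+e, e)`. -/
def IsTightDesign (n e : ℕ) (X : Finset (Euc n)) (w : Euc n → ℝ) : Prop :=
  IsTightOnS n e X w ∧ dimPolOn n e (suppSpheres n X) = (n + e).choose e

/-- `Y` is a spherical `t`-design on the unit sphere `S^{n-1} ⊆ ℝⁿ`:
the average of every polynomial of degree at most `t` over the sphere (with respect to
the `O(n)`-invariant surface measure) equals its average over `Y`. -/
def IsSphericalDesign (n t : ℕ) (Y : Finset (Euc n)) : Prop :=
  Y.Nonempty ∧ (↑Y : Set (Euc n)) ⊆ Metric.sphere (0 : Euc n) 1 ∧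
    ∀ p : MvPolynomial (Fin n) ℝ, p.totalDegree ≤ t →
      (⨍ x in Metric.sphere (0 : Euc n) 1, evalPt x p ∂(μH[(n : ℝ) - 1]))
        = (∑ x ∈ Y, evalPt x p) / Y.card

/-! If a polynomial `p` of degree at most `e` vanishes on a spherical `2e`-design `Y`, then
`p * p` has degree at most `2e`, so its average over the sphere equals its average over `Y`,
which is `0`. As `p * p` is continuous and nonnegative, and the surface measure charges every
nonempty relatively open subset of the sphere, `p` vanishes on the whole sphere. For
`p = a + b` with `a`, `b` homogeneous of degrees `e` and `e - 1`, comparing `p(x)` and `p(-x)`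
shows that `a` and `b` vanish on the sphere, hence everywhere by homogeneity. So restriction to
`Y` is injective on `Hom_e ⊕ Hom_{e-1}`, whose dimension is the bound. -/

namespace MvPolynomial

theorem IsHomogeneous.eval_smul {σ R : Type*} [CommSemiring R]
    {φ : MvPolynomial σ R} {k : ℕ} (hφ : φ.IsHomogeneous k) (c : R) (x : σ → R) :
    eval (c • x) φ = c ^ k * eval x φ := by
  rw [eval_eq, eval_eq, mul_sum]
  refine sum_congr rfl fun d hd => ?_
  have hdk : d.degree = k := by_contra fun h => mem_support_iff.1 hd (hφ.coeff_eq_zero h)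
  simp only [Pi.smul_apply, smul_eq_mul, mul_pow, prod_mul_distrib, prod_pow_eq_pow_sum]
  rw [← Finsupp.degree_apply, hdk]
  ring

instance finite_homogeneousSubmodule {σ R : Type*} [Finite σ] [CommSemiring R]
    (k : ℕ) : Module.Finite R (homogeneousSubmodule σ R k) :=
  Module.Finite.iff_fg.2 (homogeneousSubmodule_fg σ R k)

theorem finrank_homogeneousSubmodule (σ K : Type*) [Fintype σ] [Field K] (k : ℕ) :
    Module.finrank K (homogeneousSubmodule σ K k) = (Fintype.card σ + k - 1).choose k := by
  have hdeg :
      {d : σ →₀ ℕ | d.degree = k} = ((univ : Finset σ).finsuppAntidiag k : Set (σ →₀ ℕ)) := by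
    ext d
    simp [mem_finsuppAntidiag, Finsupp.degree_eq_sum]
  rw [homogeneousSubmodule_eq_finsupp_supported, hdeg,
    (AddMonoidAlgebra.supportedEquivFinsupp _).finrank_eq, Module.finrank_finsupp_self]
  simp [card_finsuppAntidiag_nat_eq_choose]

end MvPolynomial

open MvPolynomial

section Sphere

variable {E : Type*} [NormedAddCommGroup E] [InnerProductSpace ℝ E] [ProperSpace E]
  [MeasurableSpace E] [BorelSpace E] {d r : ℝ}

/- Reflections act transitively on the sphere and preserve `μH[d]`, so finitely many
reflected copies of `U ∩ sphere 0 r` cover the compact sphere. -/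
theorem hausdorffMeasure_inter_sphere_ne_zero {U : Set E} (hU : IsOpen U)
    (hUS : (U ∩ sphere 0 r).Nonempty) (hS : μH[d] (sphere (0 : E) r) ≠ 0) :
    μH[d] (U ∩ sphere 0 r) ≠ 0 := by
  obtain ⟨x₀, hx₀U, hx₀S⟩ := hUS
  have hmove : ∀ y ∈ sphere (0 : E) r, ∃ f : E ≃ₗᵢ[ℝ] E, f x₀ = y := fun y hy =>
    ⟨Submodule.reflection (ℝ ∙ (x₀ - y))ᗮ, Submodule.reflection_sub
      (by rw [mem_sphere_zero_iff_norm.1 hx₀S, mem_sphere_zero_iff_norm.1 hy])⟩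
  choose! f hf using hmove
  obtain ⟨t, -, htfin, hcover⟩ := (isCompact_sphere (0 : E) r).elim_finite_subcover_image
    (fun y _ => (f y).toHomeomorph.isOpenMap U hU)
    (fun y hy => Set.mem_biUnion hy ⟨x₀, hx₀U, hf y hy⟩)
  have hpiece (y : E) : μH[d] (f y '' U ∩ sphere 0 r) = μH[d] (U ∩ sphere 0 r) := by
    have himg : f y '' sphere 0 r = sphere 0 r := by simp
    calc μH[d] (f y '' U ∩ sphere 0 r) = μH[d] (f y '' (U ∩ sphere 0 r)) := by
          rw [Set.image_inter (f y).injective, himg]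
      _ = μH[d] (U ∩ sphere 0 r) :=
          (f y).isometry.hausdorffMeasure_image (Or.inr (f y).surjective) _
  intro h0
  refine hS (measure_mono_null (fun x hx => ?_)
    ((measure_biUnion_null_iff htfin.countable).2 fun y _ => (hpiece y).trans h0))
  obtain ⟨y, hyt, hxy⟩ := Set.mem_iUnion₂.1 (hcover hx)
  exact Set.mem_iUnion₂.2 ⟨y, hyt, hxy, hx⟩

theorem eqOn_zero_of_setIntegral_sphere_eq_zero {f : E → ℝ} (hf : Continuous f) (hf₀ : 0 ≤ f)
    (hS₀ : μH[d] (sphere (0 : E) r) ≠ 0) (hS : μH[d] (sphere (0 : E) r) ≠ ⊤)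
    (hint : ∫ x in sphere 0 r, f x ∂μH[d] = 0) : Set.EqOn f 0 (sphere 0 r) := by
  have hfi : IntegrableOn f (sphere 0 r) μH[d] := hf.continuousOn.integrableOn_of_subset_isCompact
    (isCompact_sphere 0 r) isClosed_sphere.measurableSet subset_rfl hS
  have hae := (setIntegral_eq_zero_iff_of_nonneg_ae (ae_of_all _ hf₀) hfi).1 hint
  rw [Filter.EventuallyEq, ae_restrict_iff' isClosed_sphere.measurableSet] at hae
  have hnull : μH[d] ({y | f y ≠ 0} ∩ sphere 0 r) = 0 := by
    refine measure_mono_null ?_ (ae_iff.1 hae)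
    rintro y ⟨hfy, hy⟩ hyf
    exact hfy (hyf hy)
  intro x hx
  by_contra hfx
  exact hausdorffMeasure_inter_sphere_ne_zero (isOpen_compl_singleton.preimage hf)
    ⟨x, hfx, hx⟩ hS₀ hnull

end Sphere

section Polynomial

variable {n : ℕ}

theorem continuous_evalPt (p : MvPolynomial (Fin n) ℝ) : Continuous fun x : Euc n => evalPt x p :=
  (MvPolynomial.continuous_eval p).comp (PiLp.continuous_ofLp 2 _)

theorem MvPolynomial.IsHomogeneous.evalPt_smul {p : MvPolynomial (Fin n) ℝ} {k : ℕ}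
    (hp : p.IsHomogeneous k) (c : ℝ) (x : Euc n) : evalPt (c • x) p = c ^ k * evalPt x p :=
  hp.eval_smul c _

theorem MvPolynomial.IsHomogeneous.eq_zero_of_evalPt_eq_zero_on_sphere [NeZero n]
    {p : MvPolynomial (Fin n) ℝ} {k : ℕ} (hp : p.IsHomogeneous k)
    (h : ∀ x ∈ sphere (0 : Euc n) 1, evalPt x p = 0) : p = 0 := by
  refine hp.eq_zero_of_forall_eval_eq_zero fun v => ?_
  obtain ⟨u, hu⟩ := (NormedSpace.sphere_nonempty (x := (0 : Euc n)) (r := 1)).2 zero_le_one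
  change evalPt (WithLp.toLp 2 v) p = 0
  rcases eq_or_ne (WithLp.toLp 2 v) 0 with h0 | hne
  · rw [h0, ← zero_smul ℝ u, hp.evalPt_smul, h u hu, mul_zero]
  · rw [← smul_inv_smul₀ (norm_ne_zero_iff.2 hne) (WithLp.toLp 2 v), hp.evalPt_smul,
      h _ (mem_sphere_zero_iff_norm.2 (by
        rw [norm_smul, norm_inv, norm_norm, inv_mul_cancel₀ (norm_ne_zero_iff.2 hne)])), mul_zero]

theorem eq_zero_of_evalPt_add_eq_zero_on_sphere [NeZero n] {a b : MvPolynomial (Fin n) ℝ}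
    {k : ℕ} (ha : a.IsHomogeneous (k + 1)) (hb : b.IsHomogeneous k)
    (h : ∀ x ∈ sphere (0 : Euc n) 1, evalPt x (a + b) = 0) : a = 0 ∧ b = 0 := by
  have hab : ∀ x ∈ sphere (0 : Euc n) 1, evalPt x a = 0 ∧ evalPt x b = 0 := by
    have hadd (y : Euc n) : evalPt y (a + b) = evalPt y a + evalPt y b := map_add _ a b
    intro x hx
    have hpos := (hadd x).symm.trans (h x hx)
    have hneg := (hadd _).symm.trans (h ((-1 : ℝ) • x) (by simpa using hx))
    rw [ha.evalPt_smul, hb.evalPt_smul, pow_succ] at hneg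
    have hk : ((-1 : ℝ) ^ k) * (evalPt x a - evalPt x b) = 0 := by linear_combination -hneg
    have := (mul_eq_zero.1 hk).resolve_left (pow_ne_zero _ (by norm_num))
    constructor <;> linarith
  exact ⟨ha.eq_zero_of_evalPt_eq_zero_on_sphere fun x hx => (hab x hx).1,
    hb.eq_zero_of_evalPt_eq_zero_on_sphere fun x hx => (hab x hx).2⟩

end Polynomial

namespace IsSphericalDesign

variable {n t : ℕ} {Y : Finset (Euc n)}

theorem hausdorffMeasure_sphere_ne_zero_and_ne_top (hY : IsSphericalDesign n t Y) :
    μH[(n : ℝ) - 1] (sphere (0 : Euc n) 1) ≠ 0 ∧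
      μH[(n : ℝ) - 1] (sphere (0 : Euc n) 1) ≠ ⊤ := by
  obtain ⟨hYne, -, hdes⟩ := hY
  have hone := hdes 1 (by simp)
  simp only [evalPt, map_one, setAverage_eq, setIntegral_const, sum_const, nsmul_eq_mul,
    mul_one, smul_eq_mul] at hone
  rw [div_self (Nat.cast_ne_zero.2 hYne.card_pos.ne')] at hone
  refine ENNReal.toReal_ne_zero.1 fun h0 => ?_
  simp [measureReal_def, h0] at hone

theorem evalPt_eq_zero_on_sphere {e : ℕ} (hY : IsSphericalDesign n (2 * e) Y)
    {p : MvPolynomial (Fin n) ℝ} (hp : p.totalDegree ≤ e) (hpY : ∀ y ∈ Y, evalPt y p = 0) :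
    ∀ x ∈ sphere (0 : Euc n) 1, evalPt x p = 0 := by
  obtain ⟨hS₀, hS⟩ := hY.hausdorffMeasure_sphere_ne_zero_and_ne_top
  have hsq := hY.2.2 (p * p) ((totalDegree_mul p p).trans (by omega))
  rw [sum_eq_zero fun y hy => by rw [evalPt, map_mul, ← evalPt, hpY y hy, zero_mul],
    zero_div, setAverage_eq, smul_eq_zero] at hsq
  have hint : ∫ x in sphere 0 1, evalPt x (p * p) ∂μH[(n : ℝ) - 1] = 0 :=
    hsq.resolve_left (inv_ne_zero (ENNReal.toReal_ne_zero.2 ⟨hS₀, hS⟩))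
  intro x hx
  have := eqOn_zero_of_setIntegral_sphere_eq_zero (continuous_evalPt (p * p))
    (fun y => by simpa [evalPt] using mul_self_nonneg (evalPt y p)) hS₀ hS hint hx
  simpa [evalPt] using this

theorem injective_restrict_homogeneous [NeZero n] {k : ℕ}
    (hY : IsSphericalDesign n (2 * (k + 1)) Y) :
    Function.Injective (polyRestrict n Y ∘ₗ
      (homogeneousSubmodule (Fin n) ℝ (k + 1)).subtype.coprod
        (homogeneousSubmodule (Fin n) ℝ k).subtype) := by
  refine (injective_iff_map_eq_zero _).2 fun ⟨a, b⟩ hab => ?_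
  have hdeg : (a + b : MvPolynomial (Fin n) ℝ).totalDegree ≤ k + 1 :=
    (totalDegree_add _ _).trans (max_le a.2.totalDegree_le (b.2.totalDegree_le.trans k.le_succ))
  have hvan := hY.evalPt_eq_zero_on_sphere hdeg fun y hy => congrFun hab ⟨y, hy⟩
  obtain ⟨ha, hb⟩ := eq_zero_of_evalPt_add_eq_zero_on_sphere a.2 b.2 hvan
  ext <;> simp [ha, hb]

end IsSphericalDesign

/-- If `X ⊆ S^{n-1}` is a spherical `2e`-design (`e ≥ 1`, `n ≥ 2`),
then `|X| ≥ C(n-1+e, n-1) + C(n-2+e, n-1)`. -/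
theorem spherical_design_card_lower_bound (n e : ℕ) (hn : 2 ≤ n) (he : 1 ≤ e)
    (Y : Finset (Euc n)) (hY : IsSphericalDesign n (2 * e) Y) :
    (n - 1 + e).choose (n - 1) + (n - 2 + e).choose (n - 1) ≤ Y.card := by
  obtain ⟨k, rfl⟩ : ∃ k, e = k + 1 := ⟨e - 1, by omega⟩
  have : NeZero n := ⟨by omega⟩
  have h := LinearMap.finrank_le_finrank_of_injective hY.injective_restrict_homogeneous
  rw [Module.finrank_prod, finrank_homogeneousSubmodule, finrank_homogeneousSubmodule,
    Module.finrank_fintype_fun_eq_card, Fintype.card_fin] at h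
  have hcount : (n - 1 + (k + 1)).choose (n - 1) + (n - 2 + (k + 1)).choose (n - 1)
      = (n + (k + 1) - 1).choose (k + 1) + (n + k - 1).choose k := by
    rw [show n - 2 + (k + 1) = n - 1 + k by omega, Nat.choose_symm_add, Nat.choose_symm_add,
      show n - 1 + (k + 1) = n + (k + 1) - 1 by omega, show n - 1 + k = n + k - 1 by omega]
  simpa [hcount] using h

end
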